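/- For all integers m, k ≥ 1, D(0, m, s, k) = f(−1, x, q·s)^k · (∏_{i=1}^{k} f(i·m, x, s)) · D(m, m, s, k−1), where D(n, m, s, k) = det( f(n+m·i, x, s)^j · f(n+m·i−1, x, q·s)^{k−j} )_{i,j=0}^{k}. -/
import Mathlib


open Finset

variable {K : Type*} [Field K]

noncomputable def qFibPos (q x t : K) : ℕ → K
  | 0 => 0
  | 1 => 1
  | n + 2 => x * qFibPos q x t (n + 1) + q ^ n * t * qFibPos q x t n

noncomputable def qFibNeg (q x t : K) : ℕ → K
  | 0 => 0
  | 1 => q / t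
  | m + 2 => (qFibNeg q x t m - x * qFibNeg q x t (m + 1)) * q ^ (m + 2) / t

/-- The Carlitz q-Fibonacci polynomial `f(n, x, t)` for `n : ℤ`, defined by `f 0 = 0`,
`f 1 = 1` and `f n = x * f (n-1) + q^(n-2) * t * f (n-2)`, solved backwards for `n < 0`. -/
noncomputable def qFib (q x t : K) : ℤ → K
  | Int.ofNat n => qFibPos q x t n
  | Int.negSucc m => qFibNeg q x t (m + 1)

/-- The determinant `D(n, m, s, k) = det( f(n+mi,x,s)^j · f(n+mi-1,x,qs)^{k-j} )_{i,j=0}^{k}`. -/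
noncomputable def Ddet (q x s : K) (n : ℤ) (m k : ℕ) : K :=
  Matrix.det (Matrix.of fun i j : Fin (k + 1) =>
    qFib q x s (n + m * (i : ℕ)) ^ (j : ℕ) *
      qFib q x (q * s) (n + m * (i : ℕ) - 1) ^ (k - (j : ℕ)))

lemma qFib_zero (q x t : K) : qFib q x t 0 = 0 := rfl

theorem Ddet_zero_expand (q x s : K) (hq : q ≠ 0) (hs : s ≠ 0)
    (m k : ℕ) (hm : 1 ≤ m) (hk : 1 ≤ k) :
    Ddet q x s 0 m k =
      qFib q x (q * s) (-1) ^ k * (∏ i ∈ Finset.range k, qFib q x s (((i : ℤ) + 1) * m)) *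
        Ddet q x s (m : ℤ) m (k - 1) := by
  obtain ⟨k, rfl⟩ : ∃ k', k = k' + 1 := ⟨k - 1, (Nat.succ_pred_eq_of_pos hk).symm⟩
  simp only [Nat.add_sub_cancel]
  rw [Ddet, Matrix.det_succ_row_zero]
  rw [Finset.sum_eq_single 0]
  · simp only [Fin.val_zero, pow_zero, one_mul, Matrix.of_apply, Fin.succAbove_zero,
      Nat.cast_zero, mul_zero, add_zero, qFib_zero, Nat.sub_zero]
    have h1 : (0:ℤ) - 1 = -1 := by ring
    rw [h1]
    have hsub : (Matrix.of fun i j : Fin (k + 1 + 1) =>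
        qFib q x s ((0:ℤ) + m * (i : ℕ)) ^ (j : ℕ) *
          qFib q x (q * s) ((0:ℤ) + m * (i : ℕ) - 1) ^ (k + 1 - (j : ℕ))).submatrix
          Fin.succ Fin.succ =
        Matrix.of (fun i j : Fin (k + 1) =>
          qFib q x s ((m : ℤ) * ((i : ℕ) + 1)) *
          (Matrix.of fun i j : Fin (k + 1) =>
            qFib q x s ((m : ℤ) + m * (i : ℕ)) ^ (j : ℕ) *
              qFib q x (q * s) ((m : ℤ) + m * (i : ℕ) - 1) ^ (k - (j : ℕ))) i j) := by
      ext i j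
      simp only [Matrix.submatrix_apply, Matrix.of_apply, Fin.val_succ]
      have ha : (0:ℤ) + m * ((i : ℕ) + 1 : ℕ) = (m : ℤ) * ((i : ℕ) + 1) := by push_cast; ring
      have hb : (m : ℤ) * ((i : ℕ) + 1) = (m : ℤ) + m * (i : ℕ) := by push_cast; ring
      have hc : k + 1 - ((j : ℕ) + 1) = k - (j : ℕ) := by omega
      rw [ha, hc, pow_succ, hb]
      ring
    rw [hsub, Matrix.det_mul_column, ← Ddet]
    have hprod : ∏ i : Fin (k+1), qFib q x s ((m : ℤ) * ((i : ℕ) + 1)) =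
        ∏ i ∈ Finset.range (k+1), qFib q x s (((i : ℤ) + 1) * m) := by
      rw [Fin.prod_univ_eq_prod_range (fun i => qFib q x s ((m : ℤ) * ((i : ℕ) + 1)))]
      refine Finset.prod_congr rfl fun i _ => ?_
      congr 1
      push_cast
      ring
    rw [hprod]
    ring
  · intro j _ hj
    have h0 : qFib q x s ((0:ℤ) + m * ((0 : Fin (k+1+1)) : ℕ)) = 0 := by
      norm_num [qFib_zero]
    simp only [Matrix.of_apply, h0]
    rw [zero_pow (fun h => hj (Fin.ext (by simp [h])))]
    ring
  · intro h; exact absurd (Finset.mem_univ _) h
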